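/- Let f ≥ 128 be an even integer, N := f/2 + 1, κ(t) := (sin(Nπt)/(N·sin(πt)))⁴ for t ∉ ℤ and κ(t) := 1 for t ∈ ℤ, C_f := π²f(f+4)/3, and for t ∈ ℝ^d let K(t) := Π_{i=1}^d κ(t_i). Let s ≥ 1 be a real number and Ā ≥ 2π/√3. Then for every t ∈ [−1/2, 1/2]^d with ‖t‖₂ ≥ Ā·√d·s^{1/4}/√C_f, one has |K(t)| ≤ (1 + (3/(4π²))·Ā²·d·√s)^{−2}. -/

import Mathlib

open Classical

/-- The univariate Fejér-type kernel `κ(t) = (sin(Nπt)/(N sin(πt)))⁴` with `N = f/2 + 1`,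
extended by `1` at the integers (where the formula degenerates). -/
noncomputable def fejerKappa (f : ℕ) : ℝ → ℝ := fun t =>
  if ∃ n : ℤ, t = (n : ℝ) then 1
  else (Real.sin (((f : ℝ) / 2 + 1) * Real.pi * t) /
      (((f : ℝ) / 2 + 1) * Real.sin (Real.pi * t))) ^ 4

/-- The constant `C_f = −κ''(0) = π² f (f+4)/3`. -/
noncomputable def fejerC (f : ℕ) : ℝ := Real.pi ^ 2 * f * (f + 4) / 3

/-!
For `|t| ≤ 1/2` and `N = f/2 + 1` one has `κ(t) ≤ (1 + (N² - 1) t²)⁻²`: when `3N²t² ≥ 1` this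
follows from `sin² ≤ 1` and Jordan's inequality `sin(πt) ≥ 2t`, and when `3N²t² ≤ 1` from Taylor
bounds for `sin(Nπt)` and `sin(πt)`, which leave room to spare because `1/π² < 1/4`.
Since `∏ᵢ (1 + c tᵢ²) ≥ 1 + c ‖t‖²` and `N² - 1 = 3 C_f / (4π²)`, the separation hypothesis
`‖t‖² ≥ Ā² d √s / C_f` turns this into the claimed decay of `K`.
-/

open Real

theorem Finset.one_add_sum_le_prod_one_add {ι R : Type*} [CommSemiring R] [PartialOrder R]
    [IsOrderedRing R] (s : Finset ι) {x : ι → R} (hx : ∀ i ∈ s, 0 ≤ x i) :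
    1 + ∑ i ∈ s, x i ≤ ∏ i ∈ s, (1 + x i) := by
  induction s using Finset.cons_induction with
  | empty => simp
  | cons a s ha ih =>
    rw [Finset.prod_cons, Finset.sum_cons]
    have hxa : 0 ≤ x a := hx a (Finset.mem_cons_self a s)
    have hs : ∀ i ∈ s, 0 ≤ x i := fun i hi => hx i (Finset.mem_cons_of_mem hi)
    calc 1 + (x a + ∑ i ∈ s, x i)
        ≤ 1 + (x a + ∑ i ∈ s, x i) + x a * ∑ i ∈ s, x i :=
          le_add_of_nonneg_right (mul_nonneg hxa (Finset.sum_nonneg hs))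
      _ = (1 + x a) * (1 + ∑ i ∈ s, x i) := by ring
      _ ≤ (1 + x a) * ∏ i ∈ s, (1 + x i) :=
          mul_le_mul_of_nonneg_left (ih hs) (add_nonneg zero_le_one hxa)

theorem sin_sq_le_sq_mul_quartic {u : ℝ} (hu₀ : 0 ≤ u) (hu : u ^ 2 ≤ 24) :
    sin u ^ 2 ≤ u ^ 2 * (1 - u ^ 2 / 4 + u ^ 4 / 48) := by
  -- Mathlib's cubic lower bound for `sin` becomes an upper bound for `sin² u` through
  -- `sin² u = 4 sin² v (1 - sin² v)`, `v = u / 2`; halving keeps `v - v³/6` nonnegative.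
  set v := u / 2
  have hv₀ : 0 ≤ v := by positivity
  have hcube : 0 ≤ v - v ^ 3 / 6 := by
    have : v ^ 2 ≤ 6 := by simp only [v]; linarith
    nlinarith
  have hsin_lower : (v - v ^ 3 / 6) ^ 2 ≤ sin v ^ 2 :=
    pow_le_pow_left₀ hcube (sin_ge_sub_cube hv₀) 2
  calc sin u ^ 2 = 4 * sin v ^ 2 * (1 - sin v ^ 2) := by
        rw [show u = 2 * v by ring, sin_two_mul, mul_pow, mul_pow, cos_sq']; ring
    _ ≤ 4 * v ^ 2 * (1 - (v - v ^ 3 / 6) ^ 2) := by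
        have hcos : 0 ≤ 1 - sin v ^ 2 := sub_nonneg.2 (sin_sq_le_one v)
        exact mul_le_mul (mul_le_mul_of_nonneg_left sin_sq_le_sq (by norm_num)) (by linarith) hcos
          (by positivity)
    _ = u ^ 2 * (1 - u ^ 2 / 4 + u ^ 4 / 48) - u ^ 8 / 2304 := by ring
    _ ≤ u ^ 2 * (1 - u ^ 2 / 4 + u ^ 4 / 48) := by linarith [pow_nonneg hu₀ 8]

theorem one_add_div_pi_sq_mul_quartic_le {a b : ℝ} (ha₀ : 0 ≤ a) (ha : a ≤ π ^ 2 / 3)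
    (hb : b ≤ a / 9) : (1 + a / π ^ 2) * (1 - a / 4 + a ^ 2 / 48) ≤ (1 - b / 6) ^ 2 := by
  have hp : 9.8 ≤ π ^ 2 := by nlinarith [pi_gt_d2]
  have hp' : π ^ 2 ≤ 9.93 := by nlinarith [pi_lt_d2, pi_pos]
  rw [one_add_div (by positivity), div_mul_eq_mul_div, div_le_iff₀ (by positivity)]
  nlinarith [mul_nonneg ha₀ ha₀, mul_nonneg ha₀ (sub_nonneg.2 ha),
    mul_nonneg (mul_nonneg ha₀ ha₀) (sub_nonneg.2 ha), sq_nonneg b,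
    mul_nonneg ha₀ (sub_nonneg.2 hp)]

theorem sin_mul_sq_le_of_one_le {N t : ℝ} (ht₀ : 0 ≤ t) (ht : t ≤ 1 / 2)
    (hlarge : 1 ≤ 3 * N ^ 2 * t ^ 2) :
    (1 + (N ^ 2 - 1) * t ^ 2) * sin (N * π * t) ^ 2 ≤ N ^ 2 * sin (π * t) ^ 2 := by
  have hjordan : 2 * t ≤ sin (π * t) := by
    have := mul_le_sin (x := π * t) (by positivity) (by nlinarith [pi_pos])
    rwa [← mul_assoc, div_mul_cancel₀ _ pi_ne_zero] at this
  have hcoef : 0 ≤ 1 + (N ^ 2 - 1) * t ^ 2 := by nlinarith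
  calc (1 + (N ^ 2 - 1) * t ^ 2) * sin (N * π * t) ^ 2 ≤ 1 + (N ^ 2 - 1) * t ^ 2 :=
        mul_le_of_le_one_right hcoef (sin_sq_le_one _)
    _ ≤ N ^ 2 * (2 * t) ^ 2 := by nlinarith
    _ ≤ N ^ 2 * sin (π * t) ^ 2 := by gcongr

theorem sin_mul_sq_le_of_le_one {N t : ℝ} (hN : 3 ≤ N) (ht₀ : 0 ≤ t)
    (hsmall : 3 * N ^ 2 * t ^ 2 ≤ 1) :
    (1 + (N ^ 2 - 1) * t ^ 2) * sin (N * π * t) ^ 2 ≤ N ^ 2 * sin (π * t) ^ 2 := by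
  set x := π * t
  set u := N * π * t
  have hux : u ^ 2 = N ^ 2 * x ^ 2 := by ring
  have hNt : 1 + N ^ 2 * t ^ 2 = 1 + u ^ 2 / π ^ 2 := by field_simp; ring
  have ha : u ^ 2 ≤ π ^ 2 / 3 := by
    rw [show u ^ 2 = π ^ 2 * (N ^ 2 * t ^ 2) by ring]; nlinarith [pi_pos]
  have hb : x ^ 2 ≤ u ^ 2 / 9 := by
    have : 9 ≤ N ^ 2 := by nlinarith
    rw [hux]; nlinarith [mul_le_mul_of_nonneg_right this (sq_nonneg x)]
  have hπ : π ^ 2 < 10 := by nlinarith [pi_lt_d2, pi_pos]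
  have hsin_x : x ^ 2 * (1 - x ^ 2 / 6) ^ 2 ≤ sin x ^ 2 := by
    have hx₀ : 0 ≤ x := by positivity
    calc x ^ 2 * (1 - x ^ 2 / 6) ^ 2 = (x - x ^ 3 / 6) ^ 2 := by ring
      _ ≤ sin x ^ 2 := pow_le_pow_left₀ (by nlinarith) (sin_ge_sub_cube hx₀) 2
  have hsin_u := sin_sq_le_sq_mul_quartic (by positivity : 0 ≤ u) (by linarith)
  calc (1 + (N ^ 2 - 1) * t ^ 2) * sin u ^ 2
      ≤ (1 + u ^ 2 / π ^ 2) * (u ^ 2 * (1 - u ^ 2 / 4 + (u ^ 2) ^ 2 / 48)) := by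
        rw [← hNt, ← pow_mul]
        exact mul_le_mul (by nlinarith) hsin_u (sq_nonneg _) (by positivity)
    _ = u ^ 2 * ((1 + u ^ 2 / π ^ 2) * (1 - u ^ 2 / 4 + (u ^ 2) ^ 2 / 48)) := by ring
    _ ≤ u ^ 2 * (1 - x ^ 2 / 6) ^ 2 :=
        mul_le_mul_of_nonneg_left (one_add_div_pi_sq_mul_quartic_le (sq_nonneg u) ha hb)
          (sq_nonneg u)
    _ = N ^ 2 * (x ^ 2 * (1 - x ^ 2 / 6) ^ 2) := by rw [hux]; ring
    _ ≤ N ^ 2 * sin x ^ 2 := by gcongr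

theorem sin_mul_sq_le {N t : ℝ} (hN : 3 ≤ N) (ht : |t| ≤ 1 / 2) :
    (1 + (N ^ 2 - 1) * t ^ 2) * sin (N * π * t) ^ 2 ≤ N ^ 2 * sin (π * t) ^ 2 := by
  wlog ht₀ : 0 ≤ t generalizing t
  · simpa [mul_neg, sin_neg] using this (t := -t) (by rwa [abs_neg]) (by linarith)
  rw [abs_of_nonneg ht₀] at ht
  rcases le_total 1 (3 * N ^ 2 * t ^ 2) with hlarge | hsmall
  · exact sin_mul_sq_le_of_one_le ht₀ ht hlarge
  · exact sin_mul_sq_le_of_le_one hN ht₀ hsmall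

theorem fejerKappa_nonneg (f : ℕ) (t : ℝ) : 0 ≤ fejerKappa f t := by
  unfold fejerKappa; split_ifs <;> positivity

theorem fejerKappa_le {f : ℕ} (hf : 4 ≤ f) {t : ℝ} (ht : |t| ≤ 1 / 2) :
    fejerKappa f t ≤ ((1 + (((f : ℝ) / 2 + 1) ^ 2 - 1) * t ^ 2) ^ 2)⁻¹ := by
  set N : ℝ := (f : ℝ) / 2 + 1
  have hN : 3 ≤ N := by
    have : (4 : ℝ) ≤ f := by exact_mod_cast hf
    simp only [N]; linarith
  unfold fejerKappa
  split_ifs with hint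
  · obtain ⟨n, rfl⟩ := hint
    obtain rfl : n = 0 := by
      by_contra hn
      have : (1 : ℝ) ≤ |(n : ℝ)| := by exact_mod_cast Int.one_le_abs hn
      linarith
    simp
  · have hsin : sin (π * t) ≠ 0 := fun h =>
      hint (by obtain ⟨n, hn⟩ := sin_eq_zero_iff.1 h; exact ⟨n, by nlinarith [pi_pos]⟩)
    have hcoef : 0 < 1 + (N ^ 2 - 1) * t ^ 2 := by
      have := mul_nonneg (by nlinarith : (0 : ℝ) ≤ N ^ 2 - 1) (sq_nonneg t)
      linarith
    have hratio : (sin (N * π * t) / (N * sin (π * t))) ^ 2 ≤ (1 + (N ^ 2 - 1) * t ^ 2)⁻¹ := by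
      rw [div_pow, mul_pow, div_le_iff₀ (by positivity), inv_mul_eq_div,
        le_div_iff₀ hcoef, mul_comm]
      exact sin_mul_sq_le hN ht
    calc (sin (N * π * t) / (N * sin (π * t))) ^ 4
        = ((sin (N * π * t) / (N * sin (π * t))) ^ 2) ^ 2 := by ring
      _ ≤ ((1 + (N ^ 2 - 1) * t ^ 2)⁻¹) ^ 2 := by gcongr
      _ = ((1 + (N ^ 2 - 1) * t ^ 2) ^ 2)⁻¹ := inv_pow _ _

theorem prod_fejerKappa_le {ι : Type*} [Fintype ι] {f : ℕ} (hf : 4 ≤ f)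
    {t : EuclideanSpace ℝ ι} (ht : ∀ i, |t i| ≤ 1 / 2) :
    ∏ i, fejerKappa f (t i) ≤ ((1 + (((f : ℝ) / 2 + 1) ^ 2 - 1) * ‖t‖ ^ 2) ^ 2)⁻¹ := by
  set c : ℝ := ((f : ℝ) / 2 + 1) ^ 2 - 1
  have hc : 0 ≤ c := by simp only [c]; nlinarith [(Nat.cast_nonneg f : (0 : ℝ) ≤ f)]
  have hsum : 1 + c * ‖t‖ ^ 2 ≤ ∏ i, (1 + c * t i ^ 2) := by
    rw [EuclideanSpace.real_norm_sq_eq, Finset.mul_sum]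
    exact Finset.univ.one_add_sum_le_prod_one_add fun i _ => by positivity
  calc ∏ i, fejerKappa f (t i) ≤ ∏ i, ((1 + c * t i ^ 2) ^ 2)⁻¹ :=
        Finset.prod_le_prod (fun i _ => fejerKappa_nonneg f _) fun i _ => fejerKappa_le hf (ht i)
    _ = ((∏ i, (1 + c * t i ^ 2)) ^ 2)⁻¹ := by rw [Finset.prod_inv_distrib, Finset.prod_pow]
    _ ≤ ((1 + c * ‖t‖ ^ 2) ^ 2)⁻¹ := by gcongr

theorem fejerC_eq (f : ℕ) : fejerC f = 4 * π ^ 2 / 3 * (((f : ℝ) / 2 + 1) ^ 2 - 1) := by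
  unfold fejerC; ring

theorem statement10_general {d : ℕ} (f : ℕ) (hf : 128 ≤ f)
    (s : ℝ) (hs : 1 ≤ s) (A : ℝ) (hA : 2 * Real.pi / Real.sqrt 3 ≤ A)
    (t : EuclideanSpace ℝ (Fin d)) (ht : ∀ i, |t i| ≤ 1 / 2)
    (hsep : A * Real.sqrt d * s ^ ((1 : ℝ) / 4) / Real.sqrt (fejerC f) ≤ ‖t‖) :
    |∏ i, fejerKappa f (t i)| ≤
      ((1 + 3 / (4 * Real.pi ^ 2) * A ^ 2 * d * Real.sqrt s) ^ 2)⁻¹ := by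
  set c : ℝ := ((f : ℝ) / 2 + 1) ^ 2 - 1
  have hc₀ : 0 < c := by
    have : (128 : ℝ) ≤ f := by exact_mod_cast hf
    simp only [c]; nlinarith
  have hC : fejerC f = 4 * π ^ 2 / 3 * c := fejerC_eq f
  have hA₀ : 0 ≤ A := le_trans (by positivity) hA
  have hs_quarter : (s ^ ((1 : ℝ) / 4)) ^ 2 = √s := by
    rw [← rpow_mul_natCast (by linarith), sqrt_eq_rpow]; norm_num
  have hsep_sq : A ^ 2 * d * √s / fejerC f ≤ ‖t‖ ^ 2 := by
    have h := pow_le_pow_left₀ (by positivity) hsep 2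
    rwa [div_pow, mul_pow, mul_pow, sq_sqrt (Nat.cast_nonneg d), sq_sqrt (by rw [hC]; positivity),
      hs_quarter] at h
  rw [abs_of_nonneg (Finset.prod_nonneg fun i _ => fejerKappa_nonneg f _)]
  refine (prod_fejerKappa_le (by omega) ht).trans ?_
  gcongr ((1 + ?_) ^ 2)⁻¹
  calc 3 / (4 * π ^ 2) * A ^ 2 * d * √s = c * (A ^ 2 * d * √s / fejerC f) := by
        rw [hC]; field_simp
    _ ≤ c * ‖t‖ ^ 2 := by gcongr

/-- the kernel-decay estimate in the proof of Lemma 16 of the paper.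
If `Ā ≥ 2π/√3`, `s ≥ 1` and `t ∈ [−1/2, 1/2]^d` with `‖t‖₂ ≥ Ā √d s^{1/4} / √C_f`, then
`|K(t)| ≤ (1 + (3/(4π²)) Ā² d √s)^{−2}` for the multivariate Fejér kernel `K(t) = ∏ᵢ κ(tᵢ)`. -/
theorem statement10 {d : ℕ} (f : ℕ) (hfeven : Even f) (hf : 128 ≤ f)
    (s : ℝ) (hs : 1 ≤ s) (A : ℝ) (hA : 2 * Real.pi / Real.sqrt 3 ≤ A)
    (t : EuclideanSpace ℝ (Fin d)) (ht : ∀ i, |t i| ≤ 1 / 2)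
    (hsep : A * Real.sqrt d * s ^ ((1 : ℝ) / 4) / Real.sqrt (fejerC f) ≤ ‖t‖) :
    |∏ i, fejerKappa f (t i)| ≤
      ((1 + 3 / (4 * Real.pi ^ 2) * A ^ 2 * d * Real.sqrt s) ^ 2)⁻¹ :=
  statement10_general f hf s hs A hA t ht hsep
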